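/- Let λ > 0, ρ > 0 and let (x_ρ, u_ρ) satisfy: for each i with |(x_ρ)_i| = λ/ρ and 0 < |(u_ρ)_i| < 1, replacing (u_ρ)_i by sign((x_ρ)_i) does not change the value of u ↦ λ‖u‖_1 - ρ⟨x_ρ, u⟩. Consequently, from any minimizer (x_ρ, u_ρ) of the penalized G_ρ (with ρ > σ(A)‖d‖₂) one can construct ũ_ρ with (x_ρ, ũ_ρ) still a minimizer and ‖x_ρ‖_1 = ⟨x_ρ, ũ_ρ⟩. -/
import Mathlib


noncomputable def l2norm {m : Type*} [Fintype m] (v : m → ℝ) : ℝ :=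
  Real.sqrt (∑ i, (v i) ^ 2)

noncomputable def specNorm {m n : Type*} [Fintype m] [Fintype n] [DecidableEq n]
    (A : Matrix m n ℝ) : ℝ :=
  ‖LinearMap.toContinuousLinearMap (Matrix.toEuclideanLin A)‖

open Classical in
/-- The Lagrangian cost function `G_ρ` with the penalized form of `I`. -/
noncomputable def GrhoP {M N : ℕ} (A : Matrix (Fin M) (Fin N) ℝ) (d : Fin M → ℝ)
    (ρ lam : ℝ) (x u : Fin N → ℝ) : EReal :=
  (((1 : ℝ) / 2) * (∑ i, ((A.mulVec x - d) i) ^ 2)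
      + ρ * ((∑ i, |x i|) - ∑ i, x i * u i) : ℝ)
  + (if ∀ i, -1 ≤ u i ∧ u i ≤ 1 then ((lam * ∑ i, |u i| : ℝ) : EReal) else ⊤)
  + (if ∀ i, 0 ≤ x i then (0 : EReal) else ⊤)

lemma l2norm_eq_norm {n : Type*} [Fintype n] (v : n → ℝ) :
    l2norm v = ‖(WithLp.equiv 2 (n → ℝ)).symm v‖ := by
  rw [EuclideanSpace.norm_eq]
  simp [l2norm, Real.norm_eq_abs, sq_abs]

lemma mulVec_l2_le {M N : ℕ} (A : Matrix (Fin M) (Fin N) ℝ) (v : Fin N → ℝ) :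
    l2norm (A.mulVec v) ≤ specNorm A * l2norm v := by
  have h := (LinearMap.toContinuousLinearMap (Matrix.toEuclideanLin A)).le_opNorm
      ((WithLp.equiv 2 (Fin N → ℝ)).symm v)
  rw [l2norm_eq_norm, l2norm_eq_norm, specNorm]
  simpa using h

lemma abs_sum_mul_le {m : Type*} [Fintype m] (r w : m → ℝ) :
    |∑ i, r i * w i| ≤ l2norm r * l2norm w := by
  calc |∑ i, r i * w i| = Real.sqrt ((∑ i, r i * w i)^2) := (Real.sqrt_sq_eq_abs _).symm
    _ ≤ Real.sqrt ((∑ i, r i ^ 2) * ∑ i, w i ^ 2) :=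
        Real.sqrt_le_sqrt (Finset.sum_mul_sq_le_sq_mul_sq Finset.univ r w)
    _ = l2norm r * l2norm w := by
        rw [Real.sqrt_mul (by positivity)]; rfl

lemma sum_update_eq {N : ℕ} (u : Fin N → ℝ) (i : Fin N) (t : ℝ) (g : Fin N → ℝ → ℝ) :
    ∑ j, g j (Function.update u i t j) = (∑ j, g j (u j)) + (g i t - g i (u i)) := by
  have h : ∀ j, g j (Function.update u i t j)
      = Function.update (fun j => g j (u j)) i (g i t) j := by
    intro j
    rcases eq_or_ne j i with rfl | hne
    · simp
    · simp [Function.update_of_ne hne]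
  simp_rw [h]
  rw [Finset.sum_update_of_mem (Finset.mem_univ i),
    Finset.sum_eq_sum_sdiff_singleton_add (Finset.mem_univ i) (fun j => g j (u j))]
  ring

theorem penalized_construct_tilde_u (M N : ℕ) (A : Matrix (Fin M) (Fin N) ℝ)
    (d : Fin M → ℝ) (ρ lam : ℝ) (hlam : 0 < lam)
    (hρ : specNorm A * l2norm d < ρ)
    (xρ uρ : Fin N → ℝ)
    (hrepl : ∀ i, |xρ i| = lam / ρ → 0 < |uρ i| → |uρ i| < 1 →
      lam * (∑ j, |Function.update uρ i (Real.sign (xρ i)) j|)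
          - ρ * (∑ j, xρ j * Function.update uρ i (Real.sign (xρ i)) j)
        = lam * (∑ j, |uρ j|) - ρ * (∑ j, xρ j * uρ j))
    (hmin : ∀ x u : Fin N → ℝ, GrhoP A d ρ lam xρ uρ ≤ GrhoP A d ρ lam x u) :
    ∃ utilde : Fin N → ℝ,
      (∀ x u : Fin N → ℝ, GrhoP A d ρ lam xρ utilde ≤ GrhoP A d ρ lam x u) ∧
      (∑ i, |xρ i|) = ∑ i, xρ i * utilde i := by
  classical
  have hρ0 : 0 < ρ :=
    lt_of_le_of_lt (mul_nonneg (norm_nonneg _) (Real.sqrt_nonneg _)) hρ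
  set f : (Fin N → ℝ) → (Fin N → ℝ) → ℝ := fun x u =>
    ((1 : ℝ) / 2) * (∑ i, ((A.mulVec x - d) i) ^ 2)
      + ρ * ((∑ i, |x i|) - ∑ i, x i * u i) + lam * ∑ i, |u i| with hfdef
  have Geq : ∀ x u : Fin N → ℝ, (∀ i, -1 ≤ u i ∧ u i ≤ 1) → (∀ i, 0 ≤ x i) →
      GrhoP A d ρ lam x u = ((f x u : ℝ) : EReal) := by
    intro x u h1 h2
    rw [GrhoP, if_pos h1, if_pos h2, add_zero, ← EReal.coe_add]
  have hfin : GrhoP A d ρ lam xρ uρ ≤ ((f 0 0 : ℝ) : EReal) := by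
    have h := hmin 0 0
    rwa [Geq 0 0 (fun i => by norm_num) (fun i => le_refl 0)] at h
  have hadm : (∀ i, -1 ≤ uρ i ∧ uρ i ≤ 1) ∧ (∀ i, 0 ≤ xρ i) := by
    by_contra h
    rw [not_and_or] at h
    have htop : GrhoP A d ρ lam xρ uρ = ⊤ := by
      rw [GrhoP]
      rcases h with h | h
      · rw [if_neg h, EReal.coe_add_top]
        split_ifs
        · rw [add_zero]
        · exact EReal.top_add_top
      · rw [if_neg h]
        apply EReal.add_top_of_ne_bot
        split_ifs
        · rw [← EReal.coe_add]; exact EReal.coe_ne_bot _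
        · rw [EReal.coe_add_top]; simp
    rw [htop] at hfin
    exact (EReal.coe_lt_top _).not_ge hfin
  obtain ⟨hu, hx⟩ := hadm
  have hminR : ∀ x u : Fin N → ℝ, (∀ i, -1 ≤ u i ∧ u i ≤ 1) → (∀ i, 0 ≤ x i) →
      f xρ uρ ≤ f x u := by
    intro x u h1 h2
    have h := hmin x u
    rw [Geq xρ uρ hu hx, Geq x u h1 h2] at h
    exact_mod_cast h
  -- coordinatewise optimality in u, at t = 0
  have hF1 : ∀ i, lam * |uρ i| - ρ * (xρ i * uρ i) ≤ 0 := by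
    intro i
    have hadm' : ∀ j, -1 ≤ Function.update uρ i 0 j ∧ Function.update uρ i 0 j ≤ 1 := by
      intro j
      rcases eq_or_ne j i with rfl | hne
      · simp
      · simp [Function.update_of_ne hne, hu j]
    have h := hminR xρ (Function.update uρ i 0) hadm' hx
    simp only [hfdef] at h
    rw [sum_update_eq uρ i 0 (fun j s => xρ j * s),
      sum_update_eq uρ i 0 (fun j s => |s|)] at h
    simp only [mul_zero, abs_zero] at h
    nlinarith [h]
  -- positivity of uρ i where xρ i > 0
  have hupos : ∀ i, 0 < xρ i → 0 < uρ i := by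
    intro i hxi
    set c := uρ i with hc
    set w := A.mulVec (Pi.single i 1) with hw
    set r := fun j => (A.mulVec xρ - d) j with hr
    have key : ∀ t : ℝ, 0 < t → t ≤ xρ i →
        ρ * (1 - c) ≤ -(∑ j, r j * w j) + t / 2 * (∑ j, (w j) ^ 2) := by
      intro t ht htle
      have hxadm : ∀ j, 0 ≤ Function.update xρ i (xρ i - t) j := by
        intro j
        rcases eq_or_ne j i with rfl | hne
        · simp; linarith
        · simp [Function.update_of_ne hne, hx j]
      have hxupd : Function.update xρ i (xρ i - t) = xρ - t • (Pi.single i 1 : Fin N → ℝ) := by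
        funext j
        rcases eq_or_ne j i with rfl | hne
        · simp
        · simp [Function.update_of_ne hne, Pi.single_eq_of_ne hne]
      have h := hminR (Function.update xρ i (xρ i - t)) uρ hu hxadm
      simp only [hfdef] at h
      have hmv : ∀ j, (A.mulVec (Function.update xρ i (xρ i - t)) - d) j
          = r j - t * w j := by
        intro j
        rw [hxupd, Matrix.mulVec_sub, Matrix.mulVec_smul]
        simp only [Pi.sub_apply, Pi.smul_apply, smul_eq_mul, hr, hw]
        ring
      rw [show (∑ j, ((A.mulVec (Function.update xρ i (xρ i - t)) - d) j) ^ 2)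
          = ∑ j, (r j - t * w j) ^ 2 from Finset.sum_congr rfl fun j _ => by rw [hmv j]] at h
      have hexp : ∑ j, (r j - t * w j) ^ 2
          = ∑ j, (r j) ^ 2 - 2 * t * (∑ j, r j * w j) + t ^ 2 * ∑ j, (w j) ^ 2 := by
        calc ∑ j, (r j - t * w j) ^ 2
            = ∑ j, ((r j) ^ 2 - 2 * t * (r j * w j) + t ^ 2 * (w j) ^ 2) :=
              Finset.sum_congr rfl fun j _ => by ring
          _ = _ := by
              rw [Finset.sum_add_distrib, Finset.sum_sub_distrib,
                ← Finset.mul_sum, ← Finset.mul_sum]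
      rw [hexp] at h
      rw [sum_update_eq xρ i (xρ i - t) (fun j s => |s|),
        sum_update_eq xρ i (xρ i - t) (fun j s => s * uρ j)] at h
      have habs : |xρ i - t| = |xρ i| - t := by
        rw [abs_of_nonneg (by linarith), abs_of_nonneg (hx i)]
      rw [habs] at h
      have h2 : 0 ≤ t * (-(∑ j, r j * w j) + t / 2 * (∑ j, (w j) ^ 2) - ρ * (1 - c)) := by
        have hs : ∑ j, ((A.mulVec xρ - d) j) ^ 2 = ∑ j, (r j) ^ 2 :=
          Finset.sum_congr rfl fun j _ => by rw [hr]
        rw [hs] at h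
        nlinarith [h]
      have := (mul_nonneg_iff_of_pos_left ht).mp h2
      linarith
    have hP : ρ * (1 - c) ≤ -(∑ j, r j * w j) := by
      apply le_of_forall_pos_le_add
      intro ε hε
      set W := ∑ j, (w j) ^ 2 with hW
      have hW0 : 0 ≤ W := Finset.sum_nonneg fun j _ => sq_nonneg _
      set t := min (xρ i) (2 * ε / (W + 1)) with ht
      have ht0 : 0 < t := lt_min hxi (by positivity)
      have htle : t ≤ xρ i := min_le_left _ _
      have hk := key t ht0 htle
      have ht2 : t ≤ 2 * ε / (W + 1) := min_le_right _ _
      have h3 : t * (W + 1) ≤ 2 * ε := (le_div_iff₀ (by positivity)).mp ht2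
      nlinarith [hk, ht0.le, hW0, h3]
    -- bound the inner product
    have hrd : l2norm r ≤ l2norm d := by
      have h := hminR 0 uρ hu (fun j => le_refl 0)
      simp only [hfdef] at h
      have hz : ∀ j, ((A.mulVec (0 : Fin N → ℝ) - d) j) ^ 2 = (d j) ^ 2 := by
        intro j; simp [Matrix.mulVec_zero]
      rw [show (∑ j, ((A.mulVec (0 : Fin N → ℝ) - d) j) ^ 2) = ∑ j, (d j) ^ 2 from
        Finset.sum_congr rfl fun j _ => hz j] at h
      simp only [abs_zero, zero_mul, Pi.zero_apply] at h
      have hS : ∑ j, xρ j * uρ j ≤ ∑ j, |xρ j| := by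
        apply Finset.sum_le_sum
        intro j _
        calc xρ j * uρ j ≤ xρ j * 1 := mul_le_mul_of_nonneg_left (hu j).2 (hx j)
          _ = |xρ j| := by rw [mul_one, abs_of_nonneg (hx j)]
      have hρS : 0 ≤ ρ * ((∑ j, |xρ j|) - ∑ j, xρ j * uρ j) :=
        mul_nonneg hρ0.le (by linarith)
      have hs : ∑ j, ((A.mulVec xρ - d) j) ^ 2 = ∑ j, (r j) ^ 2 :=
        Finset.sum_congr rfl fun j _ => by rw [hr]
      rw [hs] at h
      rw [l2norm, l2norm]
      apply Real.sqrt_le_sqrt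
      nlinarith [h, hρS]
    have hw1 : l2norm w ≤ specNorm A := by
      have h := mulVec_l2_le A (Pi.single i 1)
      have h1 : l2norm (Pi.single i (1:ℝ) : Fin N → ℝ) = 1 := by
        rw [l2norm]
        rw [show (∑ j, ((Pi.single i (1:ℝ) : Fin N → ℝ) j) ^ 2) = 1 by
          simp [Pi.single_apply]]
        exact Real.sqrt_one
      rw [h1, mul_one] at h
      exact h
    have hchain : ρ * (1 - c) < ρ := by
      calc ρ * (1 - c) ≤ -(∑ j, r j * w j) := hP
        _ ≤ |∑ j, r j * w j| := neg_le_abs _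
        _ ≤ l2norm r * l2norm w := abs_sum_mul_le r w
        _ ≤ l2norm d * specNorm A := by
            exact mul_le_mul hrd hw1 (Real.sqrt_nonneg _) (Real.sqrt_nonneg _)
        _ = specNorm A * l2norm d := mul_comm _ _
        _ < ρ := hρ
    by_contra hcneg
    push_neg at hcneg
    have : ρ * c ≤ 0 := mul_nonpos_of_nonneg_of_nonpos hρ0.le hcneg
    nlinarith [hchain]
  -- the construction
  refine ⟨fun i => if xρ i = 0 then uρ i else 1, ?_, ?_⟩
  · intro x u
    set utilde : Fin N → ℝ := fun i => if xρ i = 0 then uρ i else 1 with hut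
    have hadm' : ∀ i, -1 ≤ utilde i ∧ utilde i ≤ 1 := by
      intro i
      rw [hut]
      by_cases h : xρ i = 0
      · simp [h, hu i]
      · simp [h]
    have hterm : ∀ i, lam * |utilde i| - ρ * (xρ i * utilde i)
        ≤ lam * |uρ i| - ρ * (xρ i * uρ i) := by
      intro i
      by_cases h : xρ i = 0
      · simp [hut, h]
      · have hxi : 0 < xρ i := lt_of_le_of_ne (hx i) (Ne.symm h)
        have hc : 0 < uρ i := hupos i hxi
        have hc1 : uρ i ≤ 1 := (hu i).2
        have hle : lam * uρ i - ρ * (xρ i * uρ i) ≤ 0 := by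
          have := hF1 i
          rwa [abs_of_pos hc] at this
        have hlams : lam ≤ ρ * xρ i := by
          have h3 : uρ i * (lam - ρ * xρ i) ≤ 0 := by nlinarith [hle]
          nlinarith [h3, hc]
        simp only [hut, if_neg h, abs_one, mul_one, abs_of_pos hc]
        nlinarith [hlams, hc1, hc]
    have hfle : f xρ utilde ≤ f xρ uρ := by
      simp only [hfdef]
      have hsum : ∑ i, (lam * |utilde i| - ρ * (xρ i * utilde i))
          ≤ ∑ i, (lam * |uρ i| - ρ * (xρ i * uρ i)) :=
        Finset.sum_le_sum fun i _ => hterm i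
      rw [Finset.sum_sub_distrib, Finset.sum_sub_distrib, ← Finset.mul_sum,
        ← Finset.mul_sum, ← Finset.mul_sum, ← Finset.mul_sum] at hsum
      ring_nf at hsum ⊢
      nlinarith [hsum]
    calc GrhoP A d ρ lam xρ utilde ≤ GrhoP A d ρ lam xρ uρ := by
          rw [Geq xρ utilde hadm' hx, Geq xρ uρ hu hx]
          exact_mod_cast hfle
      _ ≤ GrhoP A d ρ lam x u := hmin x u
  · apply Finset.sum_congr rfl
    intro i _
    by_cases h : xρ i = 0
    · simp [h]
    · have hb : (fun i => if xρ i = 0 then uρ i else 1) i = 1 := by simp [h]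
      rw [hb, mul_one, abs_of_nonneg (hx i)]
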